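/- For any red-black tree t with black height n, we have ⌊(⌈log₂(1 + |t|)⌉ − 1)/2⌋ ≤ n, where |t| denotes the number of internal (key-carrying) nodes of t. -/

import Mathlib

/-- Node colors for red-black trees. -/
inductive Color where
  | red : Color
  | black : Color
deriving DecidableEq

/-- Plain binary trees with colored nodes. -/
inductive RBTree (α : Type) where
  | leaf : RBTree α
  | node : Color → RBTree α → α → RBTree α → RBTree α

namespace RBTree

variable {α : Type}

/-- The black height of a tree (computed along the left spine). -/
def blackHeight : RBTree α → ℕ
  | leaf => 0
  | node Color.red l _ _ => blackHeight l
  | node Color.black l _ _ => blackHeight l + 1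

/-- The color of the root; leaves count as black. -/
def rootColor : RBTree α → Color
  | leaf => Color.black
  | node c _ _ _ => c

/-- In-order traversal. -/
def inorder : RBTree α → List α
  | leaf => []
  | node _ l a r => inorder l ++ a :: inorder r

/-- Number of internal (key-carrying) nodes. -/
def size : RBTree α → ℕ
  | leaf => 0
  | node _ l _ r => size l + 1 + size r

/-- `IsRBT t y n` means `t` is a valid red-black tree with root color `y`
and black height `n`, mirroring the indexed inductive family `irbt`. -/
inductive IsRBT : RBTree α → Color → ℕ → Prop where
  | leaf : IsRBT leaf Color.black 0
  | red {t₁ t₂ : RBTree α} {n : ℕ} (a : α) :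
      IsRBT t₁ Color.black n → IsRBT t₂ Color.black n →
      IsRBT (node Color.red t₁ a t₂) Color.red n
  | black {t₁ t₂ : RBTree α} {y₁ y₂ : Color} {n : ℕ} (a : α) :
      IsRBT t₁ y₁ n → IsRBT t₂ y₂ n →
      IsRBT (node Color.black t₁ a t₂) Color.black (n + 1)

end RBTree

/-!
A black level can at most quadruple the number of nodes: below a black node sit two subtrees,
each either black or red with two black children of the same black height. Hence a tree of
black height `n` has `|t| + 1 ≤ 4ⁿ` with a black root and `|t| + 1 ≤ 2 · 4ⁿ` with a red one,
so `⌈log₂ (1 + |t|)⌉ ≤ 2n + 1`.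
-/

def Color.sizeFactor : Color → ℕ
  | Color.red => 2
  | Color.black => 1

theorem Color.sizeFactor_le_two (c : Color) : c.sizeFactor ≤ 2 := by
  cases c <;> decide

namespace RBTree.IsRBT

variable {α : Type} {t : RBTree α} {y : Color} {n : ℕ}

theorem size_add_one_le (h : IsRBT t y n) : t.size + 1 ≤ y.sizeFactor * 4 ^ n := by
  induction h with
  | leaf => simp [RBTree.size, Color.sizeFactor]
  | red _ _ _ ih₁ ih₂ =>
    simp only [RBTree.size, Color.sizeFactor] at *
    omega
  | @black _ _ y₁ y₂ m _ _ _ ih₁ ih₂ =>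
    have hy₁ := Nat.mul_le_mul_right (4 ^ m) y₁.sizeFactor_le_two
    have hy₂ := Nat.mul_le_mul_right (4 ^ m) y₂.sizeFactor_le_two
    simp only [RBTree.size, Color.sizeFactor, pow_succ] at *
    omega

theorem size_add_one_le_two_pow (h : IsRBT t y n) : t.size + 1 ≤ 2 ^ (2 * n + 1) :=
  calc t.size + 1 ≤ y.sizeFactor * 4 ^ n := h.size_add_one_le
    _ ≤ 2 * 4 ^ n := Nat.mul_le_mul_right _ y.sizeFactor_le_two
    _ = 2 ^ (2 * n + 1) := by rw [pow_succ, pow_mul]; ring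

end RBTree.IsRBT

/-- **Lower bound on the black height.**  For any red-black tree `t` with
black height `n`, we have `⌊(⌈log₂ (1 + |t|)⌉ - 1) / 2⌋ ≤ n`, where `|t|` is
the number of internal (key-carrying) nodes of `t`.  (`Nat.clog 2` is the
ceiling base-2 logarithm; natural-number subtraction and division realize
the truncations.) -/
theorem clog_le_blackHeight {α : Type} {y : Color} {n : ℕ} (t : RBTree α)
    (h : RBTree.IsRBT t y n) :
    (Nat.clog 2 (1 + t.size) - 1) / 2 ≤ n := by
  have hclog : Nat.clog 2 (1 + t.size) ≤ 2 * n + 1 :=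
    Nat.clog_le_of_le_pow (by simpa [add_comm] using h.size_add_one_le_two_pow)
  omega
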